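/- If the policy set Π̂ contains an optimal policy π*, then the fixed point of the Multi-Step Optimality Operator equals Q*: Q*_{B_Π̂^N} = Q*. -/

import Mathlib

open Finset Filter Topology

/-- A transition kernel: for each state-action pair, a probability distribution over states. -/
def IsKernel {S A : Type*} [Fintype S] (P : S × A → S → ℝ) : Prop :=
  ∀ p, (∀ s', 0 ≤ P p s') ∧ ∑ s', P p s' = 1

/-- A (stochastic) policy: for each state, a probability distribution over actions. -/
def IsPolicy {S A : Type*} [Fintype A] (π : S → A → ℝ) : Prop :=
  ∀ s, (∀ a, 0 ≤ π s a) ∧ ∑ a, π s a = 1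

/-- Bellman optimality operator: (B Q)(s,a) = r(s,a) + γ ∑_{s'} P(s'|s,a) max_{a'} Q(s',a'). -/
noncomputable def bOpt {S A : Type*} [Fintype S] [Fintype A] [Nonempty A]
    (P : S × A → S → ℝ) (r : S × A → ℝ) (γ : ℝ) (Q : S × A → ℝ) : S × A → ℝ :=
  fun p => r p + γ * ∑ s', P p s' * (univ.sup' univ_nonempty fun a' => Q (s', a'))

/-- Bellman expectation operator for policy π:
    (B^π Q)(s,a) = r(s,a) + γ ∑_{s'} P(s'|s,a) ∑_{a'} π(a'|s') Q(s',a'). -/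
noncomputable def bExp {S A : Type*} [Fintype S] [Fintype A]
    (P : S × A → S → ℝ) (r : S × A → ℝ) (γ : ℝ) (π : S → A → ℝ) (Q : S × A → ℝ) :
    S × A → ℝ :=
  fun p => r p + γ * ∑ s', P p s' * ∑ a', π s' a' * Q (s', a')

/-- Greedy Multi-Step Bellman Operator: G Q = max_{π ∈ Π̂} max_{1 ≤ n ≤ N} (B^π)^{n-1} B Q,
    componentwise, over a finite nonempty policy set indexed by ι. -/
noncomputable def gOp {S A : Type*} [Fintype S] [Fintype A] [Nonempty A]
    (P : S × A → S → ℝ) (r : S × A → ℝ) (γ : ℝ)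
    {ι : Type*} [Fintype ι] [Nonempty ι] (pol : ι → S → A → ℝ)
    (N : ℕ) (hN : 1 ≤ N) (Q : S × A → ℝ) : S × A → ℝ :=
  fun p => univ.sup' univ_nonempty fun i =>
    (Icc 1 N).sup' (nonempty_Icc.mpr hN) fun n =>
      ((bExp P r γ (pol i))^[n - 1] (bOpt P r γ Q)) p

/-- Multi-Step Optimality Operator: B Q = max over policies of (B^pi)^[N-1] (bOpt Q),
    i.e. roll out the policy for N steps and bootstrap the last step with a max. -/
noncomputable def mOp {S A : Type*} [Fintype S] [Fintype A] [Nonempty A]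
    (P : S × A → S → ℝ) (r : S × A → ℝ) (γ : ℝ)
    {ι : Type*} [Fintype ι] [Nonempty ι] (pol : ι → S → A → ℝ)
    (N : ℕ) (Q : S × A → ℝ) : S × A → ℝ :=
  fun p => Finset.univ.sup' Finset.univ_nonempty fun i =>
    ((bExp P r γ (pol i))^[N - 1] (bOpt P r γ Q)) p

/-!
The optimal `Q*` is a fixed point of the multi-step operator: the roll-out of the optimal policy
reproduces `Q*`, while every other roll-out stays below it, since `B^π ≤ B` and `B Q* = Q*`.
Being built from `B^π` and `B` by composition and pointwise maxima, the operator `T` is monotone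
with `T (Q + c) ≤ T Q + γ^(N-1) γ c` for `c ≥ 0`; by Blackwell's sufficient conditions it is then a
contraction of modulus `γ^(N-1) γ < 1` in the sup metric and has no other fixed point.
-/

open scoped NNReal

/-- Blackwell's sufficient conditions for an operator to be a `β`-contraction in the sup metric. -/
structure IsBlackwell {X : Type*} (β : ℝ≥0) (T : (X → ℝ) → X → ℝ) : Prop where
  monotone : Monotone T
  add_const_le : ∀ Q (c : ℝ), 0 ≤ c → T (fun x => Q x + c) ≤ fun x => T Q x + β * c

namespace IsBlackwell

variable {X : Type*} {β β₁ β₂ : ℝ≥0} {T T₁ T₂ : (X → ℝ) → X → ℝ}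

lemma id : IsBlackwell 1 (id : (X → ℝ) → X → ℝ) :=
  ⟨monotone_id, fun Q c _ x => by simp⟩

lemma comp (h₁ : IsBlackwell β₁ T₁) (h₂ : IsBlackwell β₂ T₂) :
    IsBlackwell (β₁ * β₂) (T₁ ∘ T₂) := by
  refine ⟨h₁.monotone.comp h₂.monotone, fun Q c hc => ?_⟩
  calc T₁ (T₂ fun x => Q x + c)
      ≤ T₁ fun x => T₂ Q x + β₂ * c := h₁.monotone (h₂.add_const_le Q c hc)
    _ ≤ fun x => T₁ (T₂ Q) x + β₁ * (β₂ * c) := h₁.add_const_le _ _ (by positivity)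
    _ = fun x => T₁ (T₂ Q) x + ↑(β₁ * β₂) * c := by simp only [NNReal.coe_mul, mul_assoc]

lemma iterate (h : IsBlackwell β T) (n : ℕ) : IsBlackwell (β ^ n) T^[n] := by
  induction n with
  | zero => simpa using IsBlackwell.id
  | succ n ih => simpa only [pow_succ, Function.iterate_succ] using ih.comp h

lemma sup' {ι : Type*} [Fintype ι] [Nonempty ι] {T : ι → (X → ℝ) → X → ℝ}
    (h : ∀ i, IsBlackwell β (T i)) :
    IsBlackwell β fun Q x => univ.sup' univ_nonempty fun i => T i Q x := by
  refine ⟨fun Q₁ Q₂ hQ x => sup'_mono_fun fun i _ => (h i).monotone hQ x, fun Q c hc x => ?_⟩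
  simp only [sup'_add]
  exact sup'_mono_fun fun i _ => (h i).add_const_le Q c hc x

lemma le_add_mul_dist [Fintype X] (h : IsBlackwell β T) (Q₁ Q₂ : X → ℝ) (x : X) :
    T Q₁ x ≤ T Q₂ x + β * dist Q₁ Q₂ := by
  have hQ : Q₁ ≤ fun y => Q₂ y + dist Q₁ Q₂ := fun y => by
    have := (dist_le_pi_dist Q₁ Q₂ y).trans' (le_abs_self (Q₁ y - Q₂ y))
    linarith
  exact h.monotone hQ x |>.trans (h.add_const_le Q₂ _ dist_nonneg x)

lemma lipschitzWith [Fintype X] (h : IsBlackwell β T) : LipschitzWith β T := by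
  refine LipschitzWith.of_dist_le_mul fun Q₁ Q₂ => ?_
  refine (dist_pi_le_iff (by positivity)).2 fun x => abs_sub_le_iff.2 ⟨?_, ?_⟩
  · linarith [h.le_add_mul_dist Q₁ Q₂ x]
  · linarith [dist_comm Q₁ Q₂ ▸ h.le_add_mul_dist Q₂ Q₁ x]

end IsBlackwell

section Bellman

variable {S A : Type*} [Fintype S] [Fintype A] {P : S × A → S → ℝ} {r : S × A → ℝ}

lemma bExp_add_const (hP : IsKernel P) {π : S → A → ℝ} (hπ : IsPolicy π) (γ : ℝ)
    (Q : S × A → ℝ) (c : ℝ) :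
    bExp P r γ π (fun p => Q p + c) = fun p => bExp P r γ π Q p + γ * c := by
  funext p
  have hπc : ∀ s', ∑ a', π s' a' * (Q (s', a') + c) = ∑ a', π s' a' * Q (s', a') + c := by
    intro s'
    simp only [mul_add, sum_add_distrib, ← sum_mul, (hπ s').2, one_mul]
  simp only [bExp, hπc]
  simp only [mul_add, sum_add_distrib, ← sum_mul, (hP p).2]
  ring

lemma bOpt_add_const [Nonempty A] (hP : IsKernel P) (γ : ℝ) (Q : S × A → ℝ) (c : ℝ) :
    bOpt P r γ (fun p => Q p + c) = fun p => bOpt P r γ Q p + γ * c := by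
  funext p
  simp only [bOpt, ← sup'_add, mul_add, sum_add_distrib, ← sum_mul, (hP p).2]
  ring

lemma isBlackwell_bExp (hP : IsKernel P) {π : S → A → ℝ} (hπ : IsPolicy π) (γ : ℝ≥0) :
    IsBlackwell γ (bExp P r γ π) := by
  refine ⟨fun Q₁ Q₂ hQ p => ?_, fun Q c _ => (bExp_add_const hP hπ γ Q c).le⟩
  unfold bExp
  gcongr with s' _ a' _
  · exact (hP p).1 s'
  · exact (hπ s').1 a'
  · exact hQ _

lemma isBlackwell_bOpt [Nonempty A] (hP : IsKernel P) (γ : ℝ≥0) :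
    IsBlackwell γ (bOpt P r γ) := by
  refine ⟨fun Q₁ Q₂ hQ p => ?_, fun Q c _ => (bOpt_add_const hP γ Q c).le⟩
  unfold bOpt
  gcongr with s' _
  · exact (hP p).1 s'
  · exact hQ _

lemma bExp_le_bOpt [Nonempty A] (hP : IsKernel P) {π : S → A → ℝ} (hπ : IsPolicy π) {γ : ℝ}
    (hγ : 0 ≤ γ) (Q : S × A → ℝ) : bExp P r γ π Q ≤ bOpt P r γ Q := fun p => by
  unfold bExp bOpt
  gcongr with s' _
  · exact (hP p).1 s'
  calc ∑ a', π s' a' * Q (s', a')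
      ≤ ∑ a', π s' a' * univ.sup' univ_nonempty (fun a' => Q (s', a')) := by
        gcongr with a' _
        · exact (hπ s').1 a'
        · exact le_sup' (fun a' => Q (s', a')) (mem_univ a')
    _ = univ.sup' univ_nonempty (fun a' => Q (s', a')) := by rw [← sum_mul, (hπ s').2, one_mul]

lemma iterate_bExp_le_of_bOpt_eq [Nonempty A] (hP : IsKernel P) {π : S → A → ℝ}
    (hπ : IsPolicy π) (γ : ℝ≥0) {Q : S × A → ℝ} (hQ : bOpt P r γ Q = Q) (n : ℕ) :
    (bExp P r γ π)^[n] Q ≤ Q := by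
  calc (bExp P r γ π)^[n] Q
      ≤ (bOpt P r γ)^[n] Q :=
        (isBlackwell_bExp hP hπ γ).monotone.iterate_le_of_le (bExp_le_bOpt hP hπ γ.2) n Q
    _ = Q := Function.iterate_fixed hQ n

variable [Nonempty A] {ι : Type*} [Fintype ι] [Nonempty ι] {pol : ι → S → A → ℝ}

lemma isBlackwell_mOp (hP : IsKernel P) (hpol : ∀ i, IsPolicy (pol i)) (γ : ℝ≥0) (N : ℕ) :
    IsBlackwell (γ ^ (N - 1) * γ) (mOp P r γ pol N) :=
  IsBlackwell.sup' fun i => ((isBlackwell_bExp hP (hpol i) γ).iterate (N - 1)).comp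
    (isBlackwell_bOpt hP γ)

lemma mOp_eq_self_of_optimal_mem (hP : IsKernel P) (hpol : ∀ i, IsPolicy (pol i)) (γ : ℝ≥0)
    (N : ℕ) {Q : S × A → ℝ} (hQ : bOpt P r γ Q = Q) {π : S → A → ℝ}
    (hπ : bExp P r γ π Q = Q) (hmem : ∃ i, pol i = π) :
    mOp P r γ pol N Q = Q := by
  obtain ⟨i₀, rfl⟩ := hmem
  funext p
  refine le_antisymm (sup'_le _ _ fun i _ => ?_) (le_sup'_of_le _ (mem_univ i₀) ?_)
  · rw [hQ]
    exact iterate_bExp_le_of_bOpt_eq hP (hpol i) γ hQ (N - 1) p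
  · rw [hQ, Function.iterate_fixed hπ]

end Bellman

theorem multistep_optimality_fixed_point_eq_of_optimal_mem_general
    {S A : Type*} [Fintype S] [Fintype A] [Nonempty A]
    (P : S × A → S → ℝ) (r : S × A → ℝ) (γ : ℝ) (hγ0 : 0 < γ) (hγ1 : γ < 1)
    (hP : IsKernel P)
    {ι : Type*} [Fintype ι] [Nonempty ι]
    (pol : ι → S → A → ℝ) (hpol : ∀ i, IsPolicy (pol i))
    (N : ℕ)
    (Qstar : S × A → ℝ) (hQ : bOpt P r γ Qstar = Qstar)
    (πstar : S → A → ℝ)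
    (hopt : bExp P r γ πstar Qstar = Qstar)
    (hmem : ∃ i, pol i = πstar)
    (Qfix : S × A → ℝ) (hQfix : mOp P r γ pol N Qfix = Qfix) :
    Qfix = Qstar := by
  lift γ to ℝ≥0 using hγ0.le
  have hK : γ ^ (N - 1) * γ < 1 := by
    rw [← pow_succ]
    exact pow_lt_one₀ γ.2 (by exact_mod_cast hγ1) (N - 1).succ_ne_zero
  have hcontr : ContractingWith _ (mOp P r γ pol N) :=
    ⟨hK, (isBlackwell_mOp hP hpol γ N).lipschitzWith⟩
  exact hcontr.fixedPoint_unique' hQfix (mOp_eq_self_of_optimal_mem hP hpol γ N hQ hopt hmem)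

/-- if the policy set contains an optimal policy π*, then the fixed point
    of the Multi-Step Optimality Operator equals Q*. -/
theorem multistep_optimality_fixed_point_eq_of_optimal_mem
    {S A : Type*} [Fintype S] [Fintype A] [Nonempty S] [Nonempty A]
    (P : S × A → S → ℝ) (r : S × A → ℝ) (γ : ℝ) (hγ0 : 0 < γ) (hγ1 : γ < 1)
    (hP : IsKernel P)
    {ι : Type*} [Fintype ι] [Nonempty ι]
    (pol : ι → S → A → ℝ) (hpol : ∀ i, IsPolicy (pol i))
    (N : ℕ) (hN : 1 ≤ N)
    (Qstar : S × A → ℝ) (hQ : bOpt P r γ Qstar = Qstar)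
    (πstar : S → A → ℝ) (hπstar : IsPolicy πstar)
    (hopt : bExp P r γ πstar Qstar = Qstar)
    (hmem : ∃ i, pol i = πstar)
    (Qfix : S × A → ℝ) (hQfix : mOp P r γ pol N Qfix = Qfix) :
    Qfix = Qstar :=
  multistep_optimality_fixed_point_eq_of_optimal_mem_general P r γ hγ0 hγ1 hP pol hpol N Qstar hQ
    πstar hopt hmem Qfix hQfix
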